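/- Let d^{AB}_n be the number of signed derangements in B_n of even type-B length. Then d^{AB}_1 = 0, d^{AB}_2 = 3, and for all n ≥ 3, d^{AB}_n = (n-1)·(2·d^{AB}_{n-1} + 4·d^{AB}_{n-2} + (-1)^{n-1}). -/

import Mathlib

open Finset

/-- `w : Fin n → ℤ` is a signed permutation of `{1,…,n}`: the absolute values of its
entries form a permutation of `{1,…,n}`. -/
def isSignedPerm (n : ℕ) (w : Fin n → ℤ) : Prop :=
  (∀ i, 1 ≤ (w i).natAbs ∧ (w i).natAbs ≤ n) ∧
    Function.Injective fun i => (w i).natAbs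

/-- The inversion number of the word `w`, with respect to the usual order on `ℤ`. -/
def invW (n : ℕ) (w : Fin n → ℤ) : ℕ :=
  ((Finset.univ : Finset (Fin n × Fin n)).filter fun p => p.1 < p.2 ∧ w p.2 < w p.1).card

/-- The type-`B` length: `ℓ_B(w) = inv(w) - ∑_{i : w_i < 0} w_i`. -/
def lenB (n : ℕ) (w : Fin n → ℤ) : ℤ :=
  (invW n w : ℤ) - ∑ i ∈ Finset.univ.filter (fun i : Fin n => w i < 0), w i

/-- `w` is a signed derangement: no entry satisfies `w_i = i` (in 1-indexed notation). -/
def isDerang (n : ℕ) (w : Fin n → ℤ) : Prop :=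
  ∀ i : Fin n, w i ≠ ((i : ℕ) : ℤ) + 1

/-- The number of signed derangements in the hyperoctahedral group `B_n` whose
type-`B` length is even. -/
noncomputable def dAB (n : ℕ) : ℕ :=
  Set.ncard {w : Fin n → ℤ |
    isSignedPerm n w ∧ isDerang n w ∧ Even (lenB n w)}


/-!
Encode a signed permutation as a pair `(σ, ε)` of a permutation and a sign vector. A pair of
positions changes its inversion status under the signs exactly when its entry of larger absolute
value is negated, which gives `ℓ_B(w) ≡ inv(σ) + neg(ε) (mod 2)`. Summing `(-1)^(inv σ + neg ε)`
over signed derangements, the sum over `ε` factorises over positions and vanishes unless `σ = 1`,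
so it is `(-1)^n`; hence `2 d^{AB}_n = D_n + (-1)^n`, where `D_n` counts signed derangements.
Inclusion–exclusion over the positive fixed points gives `D_n = ∑_j (-1)^j n!/j! 2^(n-j)`, so
`D_{n+1} = 2(n+1) D_n + (-1)^(n+1)`, and eliminating `D` yields the recurrence.
-/

def signedDerangementNumber (k : ℕ) : ℤ :=
  ∑ j ∈ range (k + 1), (-1) ^ j * k.descFactorial (k - j) * 2 ^ (k - j)

theorem signedDerangementNumber_succ (k : ℕ) :
    signedDerangementNumber (k + 1) =
      2 * (k + 1) * signedDerangementNumber k + (-1) ^ (k + 1) := by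
  rw [signedDerangementNumber, sum_range_succ, Nat.sub_self, signedDerangementNumber, mul_sum]
  congr 1
  · refine sum_congr rfl fun j hj => ?_
    have hjk : k + 1 - j = k - j + 1 := by have := mem_range.mp hj; omega
    rw [hjk, Nat.succ_descFactorial_succ, pow_succ]
    push_cast
    ring
  · simp

section SignedDerangements

variable {α : Type*} [Fintype α]

def negCount (ε : α → Bool) : ℕ := #{i | ε i = true}

theorem neg_one_pow_negCount {R : Type*} [CommRing R] (ε : α → Bool) :
    (-1 : R) ^ negCount ε = ∏ i, if ε i = true then -1 else 1 := by
  rw [prod_ite, prod_const, prod_const_one, mul_one, negCount]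

variable [DecidableEq α]

-- `p.2 i = true` marks a negated entry, so only positive entries can be fixed points.
def signedDerangements : Finset (Equiv.Perm α × (α → Bool)) :=
  {p | ∀ i, p.1 i = i → p.2 i = true}

theorem sum_signedDerangements_eq_sum_perm {M : Type*} [AddCommMonoid M]
    (g : Equiv.Perm α × (α → Bool) → M) :
    ∑ p ∈ signedDerangements, g p =
      ∑ σ : Equiv.Perm α, ∑ ε ∈ {ε : α → Bool | ∀ i, σ i = i → ε i = true}, g (σ, ε) := by
  simp only [signedDerangements, sum_filter, Fintype.sum_prod_type]

theorem sum_prod_over_signs_true_on_fixedPoints {R : Type*} [CommSemiring R]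
    (σ : Equiv.Perm α) (f : α → Bool → R) :
    ∑ ε ∈ {ε : α → Bool | ∀ i, σ i = i → ε i = true}, ∏ i, f i (ε i) =
      ∏ i, if σ i = i then f i true else f i true + f i false := by
  have hpi : ({ε : α → Bool | ∀ i, σ i = i → ε i = true} : Finset _) =
      Fintype.piFinset fun i => if σ i = i then {true} else univ := by
    ext ε
    simp only [mem_filter, mem_univ, true_and, Fintype.mem_piFinset]
    refine forall_congr' fun i => ?_
    split_ifs <;> simp [*]
  rw [hpi, ← prod_univ_sum]
  refine prod_congr rfl fun i _ => ?_
  split_ifs <;> simp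

theorem sum_signedDerangements_mul_neg_one_pow {R : Type*} [CommRing R]
    (s : Equiv.Perm α → R) :
    ∑ p ∈ signedDerangements, s p.1 * (-1) ^ negCount p.2 = s 1 * (-1) ^ Fintype.card α := by
  have hσ (σ : Equiv.Perm α) :
      ∑ ε ∈ {ε : α → Bool | ∀ i, σ i = i → ε i = true}, s σ * (-1) ^ negCount ε =
        if σ = 1 then s 1 * (-1) ^ Fintype.card α else 0 := by
    have h := sum_prod_over_signs_true_on_fixedPoints σ fun _ b => if b then (-1 : R) else 1
    have hfix : (∀ i, σ i = i) ↔ σ = 1 := ⟨fun h => Equiv.ext h, fun h i => by simp [h]⟩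
    simp only [if_true, Bool.false_eq_true, if_false, neg_add_cancel, Fintype.prod_ite_zero,
      hfix, prod_const, card_univ, ← neg_one_pow_negCount] at h
    rw [← mul_sum, h]
    split_ifs with h1
    · rw [h1]
    · exact mul_zero _
  simp [sum_signedDerangements_eq_sum_perm, hσ]

theorem card_perm_fixing_pointwise (t : Finset α) :
    #{σ : Equiv.Perm α | ∀ i ∈ t, σ i = i} = (Fintype.card α - #t).factorial := by
  rw [← Fintype.card_subtype]
  have e : {σ : Equiv.Perm α // ∀ i ∈ t, σ i = i} ≃ Equiv.Perm {i // i ∉ t} :=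
    (Equiv.subtypeEquivRight fun σ => by simp).trans
      (Equiv.Perm.subtypeEquivSubtypePerm fun i => i ∉ t).symm
  rw [Fintype.card_congr e, Fintype.card_perm, Fintype.card_subtype_compl, Fintype.card_coe]

theorem card_signedDerangements :
    (#(signedDerangements : Finset (Equiv.Perm α × (α → Bool))) : ℤ) =
      signedDerangementNumber (Fintype.card α) := by
  set k := Fintype.card α
  -- `2 ^ #{i | σ i ≠ i} = ∏ i, (2 - [σ i = i])`, expanded over the subsets of the fixed points
  have hσ (σ : Equiv.Perm α) :
      ∑ ε ∈ {ε : α → Bool | ∀ i, σ i = i → ε i = true}, (1 : ℤ) =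
        ∑ t ∈ univ.powerset, if ∀ i ∈ t, σ i = i then (-1) ^ #t * 2 ^ (k - #t) else 0 := by
    have h := sum_prod_over_signs_true_on_fixedPoints σ fun _ _ => (1 : ℤ)
    simp only [prod_const_one] at h
    calc _ = ∏ i, ((if σ i = i then -1 else 0) + 2 : ℤ) := by
          rw [h]; exact prod_congr rfl fun i _ => by split_ifs <;> norm_num
      _ = _ := by
          rw [prod_add]
          refine sum_congr rfl fun t _ => ?_
          simp only [prod_ite_zero, prod_const, ite_mul, zero_mul,
            card_sdiff_of_subset (subset_univ t), card_univ, k]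
  rw [cast_card, sum_signedDerangements_eq_sum_perm]
  simp_rw [hσ]
  rw [sum_comm]
  simp_rw [← sum_filter, sum_const, card_perm_fixing_pointwise, nsmul_eq_mul]
  rw [sum_powerset_apply_card fun j => ((k - j).factorial : ℤ) * ((-1) ^ j * 2 ^ (k - j)),
    card_univ]
  refine sum_congr rfl fun j hj => ?_
  rw [Nat.descFactorial_eq_factorial_mul_choose,
    Nat.choose_symm (by simpa [Nat.lt_succ_iff] using hj), nsmul_eq_mul]
  push_cast
  ring

end SignedDerangements

theorem two_mul_card_filter_even {ι : Type*} (s : Finset ι) (f : ι → ℕ) :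
    2 * (#{x ∈ s | Even (f x)} : ℤ) = #s + ∑ x ∈ s, (-1) ^ f x := by
  have hsum : ∑ x ∈ s, (-1 : ℤ) ^ f x = #{x ∈ s | Even (f x)} - #{x ∈ s | ¬Even (f x)} := by
    rw [← sum_filter_add_sum_filter_not s fun x => Even (f x), sub_eq_add_neg,
      sum_congr rfl fun x hx => (mem_filter.mp hx).2.neg_one_pow,
      sum_congr rfl fun x hx => (Nat.not_even_iff_odd.mp (mem_filter.mp hx).2).neg_one_pow]
    simp
  have hcard := card_filter_add_card_filter_not (s := s) fun x => Even (f x)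
  rw [hsum, ← hcard]
  push_cast
  ring

theorem sum_filter_lt_add_swap {ι M : Type*} [Fintype ι] [LinearOrder ι] [AddCommMonoid M]
    (g : ι × ι → M) (hg : ∀ i, g (i, i) = 0) :
    ∑ q ∈ {q : ι × ι | q.1 < q.2}, (g q + g q.swap) = ∑ q, g q := by
  have hsplit (q : ι × ι) :
      g q = (if q.1 < q.2 then g q else 0) + (if q.2 < q.1 then g q else 0) := by
    obtain ⟨i, j⟩ := q
    rcases lt_trichotomy i j with h | rfl | h
    · simp [h, h.not_gt]
    · simp [hg]
    · simp [h, h.not_gt]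
  rw [sum_congr rfl fun q _ => hsplit q, sum_add_distrib, sum_add_distrib, sum_filter, sum_filter,
    ← (Equiv.prodComm ι ι).sum_comp fun q => if q.2 < q.1 then g q else 0]
  rfl

def applySigns {ι : Type*} (ε : ι → Bool) (a : ι → ℤ) : ι → ℤ :=
  fun i => if ε i then -a i else a i

theorem applySigns_neg_iff {ι : Type*} {ε : ι → Bool} {a : ι → ℤ} {i : ι} (hpos : 0 < a i) :
    applySigns ε a i < 0 ↔ ε i = true := by
  cases h : ε i <;> simp [applySigns, h] <;> omega

theorem pair_inversion_parity_of_signs {x y : ℤ} (hx : 0 < x) (hy : 0 < y) (hxy : x ≠ y)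
    (e f : Bool) :
    ((if (if f then -y else y) < (if e then -x else x) then 1 else 0) +
        (if y < x then 1 else 0) : ZMod 2) =
      (if e = true ∧ y < x then 1 else 0) + (if f = true ∧ x < y then 1 else 0) := by
  cases e <;> cases f <;> simp only [Bool.false_eq_true, if_true, if_false, true_and, false_and] <;>
    split_ifs <;> first | (exfalso; omega) | decide

section SignedWords

variable {n : ℕ}

theorem cast_invW_eq_sum {R : Type*} [NonAssocSemiring R] (w : Fin n → ℤ) :
    (invW n w : R) = ∑ q ∈ {q : Fin n × Fin n | q.1 < q.2}, if w q.2 < w q.1 then 1 else 0 := by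
  rw [sum_boole, filter_filter, invW]

theorem cast_invW_applySigns_add_invW {a : Fin n → ℤ} (ha : Function.Injective a)
    (hpos : ∀ i, 0 < a i) (ε : Fin n → Bool) :
    ((invW n (applySigns ε a) + invW n a : ℕ) : ZMod 2) =
      ∑ i ∈ {i | ε i = true}, (#{j | a j < a i} : ZMod 2) := by
  set g : Fin n × Fin n → ZMod 2 := fun q => if ε q.1 = true ∧ a q.2 < a q.1 then 1 else 0
  calc _ = ∑ q ∈ {q : Fin n × Fin n | q.1 < q.2}, (g q + g q.swap) := by
        rw [Nat.cast_add, cast_invW_eq_sum, cast_invW_eq_sum, ← sum_add_distrib]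
        refine sum_congr rfl fun q hq => ?_
        exact pair_inversion_parity_of_signs (hpos _) (hpos _) (ha.ne (mem_filter.mp hq).2.ne) _ _
    _ = ∑ q, g q := sum_filter_lt_add_swap g fun i => by simp [g]
    _ = _ := by
        rw [Fintype.sum_prod_type, sum_filter]
        refine sum_congr rfl fun i _ => ?_
        cases h : ε i <;> simp [g, h]

theorem lenB_applySigns {a : Fin n → ℤ} (hpos : ∀ i, 0 < a i) (ε : Fin n → Bool) :
    lenB n (applySigns ε a) = invW n (applySigns ε a) + ∑ i ∈ {i | ε i = true}, a i := by
  rw [lenB, filter_congr fun i _ => applySigns_neg_iff (hpos i), sub_eq_add_neg,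
    ← sum_neg_distrib]
  congr 1
  refine sum_congr rfl fun i hi => ?_
  simp [applySigns, (mem_filter.mp hi).2]

def permWord (σ : Equiv.Perm (Fin n)) : Fin n → ℤ := fun i => ((σ i : ℕ) : ℤ) + 1

def signedWord (p : Equiv.Perm (Fin n) × (Fin n → Bool)) : Fin n → ℤ :=
  applySigns p.2 (permWord p.1)

theorem permWord_pos (σ : Equiv.Perm (Fin n)) (i : Fin n) : 0 < permWord σ i := by
  unfold permWord; omega

theorem permWord_injective (σ : Equiv.Perm (Fin n)) : Function.Injective (permWord σ) :=
  fun i j h => σ.injective (Fin.val_injective (by simpa [permWord] using h))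

theorem permWord_lt_permWord_iff {σ : Equiv.Perm (Fin n)} {i j : Fin n} :
    permWord σ j < permWord σ i ↔ σ j < σ i := by
  rw [permWord, permWord, add_lt_add_iff_right, Nat.cast_lt, Fin.val_fin_lt]

theorem card_permWord_lt (σ : Equiv.Perm (Fin n)) (i : Fin n) :
    #{j | permWord σ j < permWord σ i} = σ i := by
  rw [filter_congr fun j _ => permWord_lt_permWord_iff, ← Fin.card_Iio]
  exact card_nbij' σ σ.symm (fun j hj => by simpa using hj) (fun j hj => by simpa using hj)
    (fun j _ => σ.symm_apply_apply j) (fun j _ => σ.apply_symm_apply j)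

theorem invW_permWord_one : invW n (permWord 1) = 0 := by
  rw [invW, card_eq_zero, filter_eq_empty_iff]
  rintro ⟨i, j⟩ - ⟨hij, hji⟩
  exact (permWord_lt_permWord_iff.mp hji).not_gt hij

theorem cast_lenB_signedWord (p : Equiv.Perm (Fin n) × (Fin n → Bool)) :
    (lenB n (signedWord p) : ZMod 2) = invW n (permWord p.1) + negCount p.2 := by
  obtain ⟨σ, ε⟩ := p
  have hinv := cast_invW_applySigns_add_invW (permWord_injective σ) (permWord_pos σ) ε
  simp only [card_permWord_lt] at hinv
  have hsum : ∑ i ∈ {i | ε i = true}, (permWord σ i : ZMod 2) =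
      ∑ i ∈ {i | ε i = true}, ((σ i : ℕ) : ZMod 2) + negCount ε := by
    simp [permWord, sum_add_distrib, negCount]
  have htwo : (2 : ZMod 2) = 0 := rfl
  rw [signedWord, lenB_applySigns (permWord_pos σ), Int.cast_add, Int.cast_natCast, Int.cast_sum,
    hsum]
  push_cast at hinv
  linear_combination hinv +
    (∑ i ∈ {i | ε i = true}, ((σ i : ℕ) : ZMod 2) - invW n (permWord σ)) * htwo

theorem even_lenB_signedWord_iff (p : Equiv.Perm (Fin n) × (Fin n → Bool)) :
    Even (lenB n (signedWord p)) ↔ Even (invW n (permWord p.1) + negCount p.2) := by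
  rw [← ZMod.intCast_eq_zero_iff_even, ← ZMod.natCast_eq_zero_iff_even, cast_lenB_signedWord,
    Nat.cast_add]

theorem natAbs_signedWord (p : Equiv.Perm (Fin n) × (Fin n → Bool)) (i : Fin n) :
    (signedWord p i).natAbs = p.1 i + 1 := by
  unfold signedWord applySigns permWord
  split_ifs <;> omega

theorem signedWord_neg_iff (p : Equiv.Perm (Fin n) × (Fin n → Bool)) (i : Fin n) :
    signedWord p i < 0 ↔ p.2 i = true :=
  applySigns_neg_iff (permWord_pos p.1 i)

theorem signedWord_injective : Function.Injective (signedWord (n := n)) := by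
  intro p q h
  have hσ : p.1 = q.1 := Equiv.ext fun i => Fin.val_injective <| by
    simpa [natAbs_signedWord] using congrArg Int.natAbs (congrFun h i)
  have hε : p.2 = q.2 := funext fun i => Bool.eq_iff_iff.mpr <| by
    rw [← signedWord_neg_iff, ← signedWord_neg_iff, h]
  exact Prod.ext hσ hε

theorem isSignedPerm_signedWord (p : Equiv.Perm (Fin n) × (Fin n → Bool)) :
    isSignedPerm n (signedWord p) := by
  refine ⟨fun i => ?_, fun i j h => ?_⟩
  · rw [natAbs_signedWord]
    exact ⟨by omega, (p.1 i).isLt⟩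
  · exact p.1.injective (Fin.val_injective (by simpa [natAbs_signedWord] using h))

theorem exists_signedWord_eq {w : Fin n → ℤ} (hw : isSignedPerm n w) :
    ∃ p, signedWord p = w := by
  obtain ⟨hbound, hinj⟩ := hw
  let f : Fin n → Fin n := fun i => ⟨(w i).natAbs - 1, by have := hbound i; omega⟩
  have hf : Function.Injective f := fun i j h => hinj <| by
    have hij := congrArg Fin.val h
    simp only [f] at hij
    have := hbound i; have := hbound j
    show (w i).natAbs = (w j).natAbs
    omega
  refine ⟨(Equiv.ofBijective f hf.bijective_of_finite, fun i => decide (w i < 0)),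
    funext fun i => ?_⟩
  have := hbound i
  simp only [signedWord, applySigns, permWord, Equiv.ofBijective_apply, f, decide_eq_true_eq]
  split_ifs <;> omega

theorem isDerang_signedWord_iff (p : Equiv.Perm (Fin n) × (Fin n → Bool)) :
    isDerang n (signedWord p) ↔ p ∈ signedDerangements := by
  simp only [isDerang, signedDerangements, mem_filter, mem_univ, true_and]
  refine forall_congr' fun i => ?_
  cases hε : p.2 i
  · have hw : signedWord p i = ((p.1 i : ℕ) : ℤ) + 1 := by
      simp [signedWord, applySigns, permWord, hε]
    simp [hw, Fin.ext_iff]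
  · have := (signedWord_neg_iff p i).mpr hε
    simp only [imp_true_iff, iff_true]
    omega

end SignedWords

theorem dAB_eq_card (n : ℕ) :
    dAB n = #{p ∈ signedDerangements | Even (invW n (permWord p.1) + negCount p.2)} := by
  have hset : {w : Fin n → ℤ | isSignedPerm n w ∧ isDerang n w ∧ Even (lenB n w)} =
      signedWord '' ↑({p ∈ signedDerangements | Even (invW n (permWord p.1) + negCount p.2)} :
        Finset _) := by
    ext w
    constructor
    · rintro ⟨hw, hd, he⟩
      obtain ⟨p, rfl⟩ := exists_signedWord_eq hw
      exact ⟨p, mem_coe.mpr (mem_filter.mpr ⟨(isDerang_signedWord_iff p).mp hd,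
        (even_lenB_signedWord_iff p).mp he⟩), rfl⟩
    · rintro ⟨p, hp, rfl⟩
      rw [mem_coe, mem_filter] at hp
      exact ⟨isSignedPerm_signedWord p, (isDerang_signedWord_iff p).mpr hp.1,
        (even_lenB_signedWord_iff p).mpr hp.2⟩
  rw [dAB, hset, Set.ncard_image_of_injective _ signedWord_injective, Set.ncard_coe_finset]

theorem two_mul_dAB (n : ℕ) : 2 * (dAB n : ℤ) = signedDerangementNumber n + (-1) ^ n := by
  have hsign := sum_signedDerangements_mul_neg_one_pow fun σ : Equiv.Perm (Fin n) =>
    (-1 : ℤ) ^ invW n (permWord σ)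
  simp only [invW_permWord_one, pow_zero, one_mul, Fintype.card_fin, ← pow_add] at hsign
  rw [dAB_eq_card, two_mul_card_filter_even, hsign, card_signedDerangements, Fintype.card_fin]

theorem dAB_succ (n : ℕ) :
    (dAB (n + 1) : ℤ) = 2 * (n + 1) * dAB n + (n + 2) * (-1) ^ (n + 1) := by
  have h := two_mul_dAB (n + 1)
  rw [signedDerangementNumber_succ] at h
  refine mul_left_cancel₀ (two_ne_zero' ℤ) ?_
  linear_combination h - 2 * (n + 1) * two_mul_dAB n

theorem stmt13 :
    dAB 1 = 0 ∧ dAB 2 = 3 ∧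
    ∀ n : ℕ, 3 ≤ n →
      (dAB n : ℤ) = ((n : ℤ) - 1) *
        (2 * (dAB (n - 1) : ℤ) + 4 * (dAB (n - 2) : ℤ) + (-1 : ℤ) ^ (n - 1)) := by
  have h0 : (dAB 0 : ℤ) = 1 := by
    have h := two_mul_dAB 0
    simp [signedDerangementNumber] at h
    linarith
  have h1 : (dAB 1 : ℤ) = 0 := by rw [dAB_succ, h0]; norm_num
  have h2 : (dAB 2 : ℤ) = 3 := by rw [dAB_succ, h1]; norm_num
  refine ⟨by exact_mod_cast h1, by exact_mod_cast h2, fun n hn => ?_⟩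
  obtain ⟨m, rfl⟩ : ∃ m, n = m + 3 := ⟨n - 3, by omega⟩
  rw [show m + 3 - 1 = m + 2 from rfl, show m + 3 - 2 = m + 1 from rfl]
  have e3 := dAB_succ (m + 2)
  have e2 := dAB_succ (m + 1)
  push_cast at e3 e2 ⊢
  linear_combination e3 + 2 * e2
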